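/- Let m > 1/2, n ≥ 1 an integer, and for 0 ≤ j ≤ n−1 set c_j = (2/n) Σ_{k=1}^∞ cos(2πkj/n)/(2πk)^{2m}. Then for every 0 ≤ l ≤ n−1, Σ_{j=0}^{n−1} c_j e^{2πi jl/n} = λ_{c,l}, where λ_{c,0} = 2 Σ_{k=1}^∞ (2πkn)^{−2m} and, for 1 ≤ l ≤ n−1, λ_{c,l} = Σ_{k=1}^∞ (2π(kn−l))^{−2m} + Σ_{k=0}^∞ (2π(kn+l))^{−2m}. -/

import Mathlib

open Real Finset

noncomputable section

/-- `c_j = (2/n) ∑_{k=1}^∞ cos(2πkj/n)/(2πk)^{2m}`. -/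
def cSeq (m : ℝ) (n : ℕ) (j : ℕ) : ℝ :=
  (2 / n) * ∑' kk : ℕ, Real.cos (2 * π * (kk + 1) * j / n) / (2 * π * (kk + 1)) ^ (2 * m)

/-- The eigenvalues `λ_{c,l}`: `λ_{c,0} = 2 ∑_{k=1}^∞ (2πkn)^{-2m}` and, for `1 ≤ l ≤ n-1`,
`λ_{c,l} = ∑_{k=1}^∞ (2π(kn-l))^{-2m} + ∑_{k=0}^∞ (2π(kn+l))^{-2m}`. -/
def lamC (m : ℝ) (n : ℕ) (l : ℕ) : ℝ :=
  if l = 0 then 2 * ∑' kk : ℕ, (2 * π * (kk + 1) * n) ^ (-(2 * m))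
  else (∑' kk : ℕ, (2 * π * ((kk + 1) * (n : ℝ) - l)) ^ (-(2 * m)))
    + ∑' kk : ℕ, (2 * π * ((kk : ℝ) * n + l)) ^ (-(2 * m))

/-! Writing `cos` through exponentials, the DFT of `j ↦ cos (2πkj/n)` at frequency `l` is `n/2`
times the number of the conditions `n ∣ k + l`, `n ∣ k - l` that hold (orthogonality of the
`n`-th roots of unity). Exchanging the finite DFT with the absolutely convergent series defining
`c_j` therefore keeps, out of `∑_k (2πk)^{-2m}`, the terms with `k ≡ -l` and those with
`k ≡ l (mod n)`. The positive integers in these classes are `kn - l` (`k ≥ 1`) and `kn + l`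
(`k ≥ 0`); for `l = 0` both classes are the multiples `kn` (`k ≥ 1`). -/

theorem IsPrimitiveRoot.geom_sum_zpow_eq_ite {K : Type*} [Field K] {ζ : K} {n : ℕ}
    (hζ : IsPrimitiveRoot ζ n) (a : ℤ) :
    ∑ j ∈ range n, (ζ ^ a) ^ j = if (n : ℤ) ∣ a then (n : K) else 0 := by
  split_ifs with ha
  · simp [(hζ.zpow_eq_one_iff_dvd a).2 ha]
  · have hne : ζ ^ a ≠ 1 := mt (hζ.zpow_eq_one_iff_dvd a).1 ha
    have hpow : (ζ ^ a) ^ n = 1 := by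
      rw [← zpow_natCast, ← zpow_mul, mul_comm, zpow_mul, hζ.zpow_eq_one, one_zpow]
    rw [geom_sum_eq hne, hpow, sub_self, zero_div]

theorem sum_range_exp_mul_div_eq_ite {n : ℕ} (hn : n ≠ 0) (a : ℤ) :
    ∑ j ∈ range n, Complex.exp (2 * π * Complex.I * a * j / n) =
      if (n : ℤ) ∣ a then (n : ℂ) else 0 := by
  rw [← (Complex.isPrimitiveRoot_exp n hn).geom_sum_zpow_eq_ite a]
  refine sum_congr rfl fun j _ => ?_
  rw [← Complex.exp_int_mul, ← Complex.exp_nat_mul]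
  ring_nf

theorem sum_range_cos_mul_exp {n : ℕ} (hn : n ≠ 0) (a l : ℤ) :
    ∑ j ∈ range n,
        (Real.cos (2 * π * a * j / n) : ℂ) * Complex.exp (2 * π * Complex.I * j * l / n) =
      ((if (n : ℤ) ∣ a + l then (n : ℂ) else 0) +
        if (n : ℤ) ∣ a - l then (n : ℂ) else 0) / 2 := by
  have hsplit : ∀ j : ℕ,
      (Real.cos (2 * π * a * j / n) : ℂ) * Complex.exp (2 * π * Complex.I * j * l / n) =
        (Complex.exp (2 * π * Complex.I * ((a + l : ℤ) : ℂ) * j / n)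
          + Complex.exp (2 * π * Complex.I * ((l - a : ℤ) : ℂ) * j / n)) / 2 := fun j => by
    rw [Complex.ofReal_cos, Complex.cos, div_mul_eq_mul_div, add_mul, ← Complex.exp_add,
      ← Complex.exp_add]
    congr 3 <;> push_cast <;> ring
  simp_rw [hsplit, ← sum_div, sum_add_distrib, sum_range_exp_mul_div_eq_ite hn, dvd_sub_comm]

theorem sum_range_cosine_series_mul_exp {n : ℕ} (hn : n ≠ 0) {b : ℕ → ℝ} (hb : Summable b)
    (l : ℕ) :
    ∑ j ∈ range n,
        (((2 / n) * ∑' k : ℕ, Real.cos (2 * π * (k + 1) * j / n) * b k : ℝ) : ℂ) *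
          Complex.exp (2 * π * Complex.I * j * l / n) =
      ((∑' k : ℕ, if (n : ℤ) ∣ (k + 1 : ℤ) + l then b k else 0) +
          ∑' k : ℕ, if (n : ℤ) ∣ (k + 1 : ℤ) - l then b k else 0 : ℝ) := by
  have hcos : ∀ j : ℕ, Summable fun k : ℕ => Real.cos (2 * π * (k + 1) * j / n) * b k :=
    fun j => hb.abs.of_norm_bounded fun k => by
      rw [norm_mul, Real.norm_eq_abs]
      exact mul_le_of_le_one_left (abs_nonneg _) (abs_cos_le_one _)
  have hite : ∀ (p : ℕ → Prop) [DecidablePred p], Summable fun k => if p k then b k else 0 :=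
    fun p _ => hb.summable_of_eq_zero_or_self fun k => by split_ifs <;> simp
  have hk : ∀ k : ℕ, ∑ j ∈ range n,
        ((2 / n * (Real.cos (2 * π * (k + 1) * j / n) * b k) : ℝ) : ℂ) *
          Complex.exp (2 * π * Complex.I * j * l / n) =
      ((if (n : ℤ) ∣ (k + 1 : ℤ) + l then b k else 0) +
          if (n : ℤ) ∣ (k + 1 : ℤ) - l then b k else 0 : ℝ) := fun k => by
    have h := sum_range_cos_mul_exp hn (k + 1) l
    simp only [Int.cast_add, Int.cast_natCast, Int.cast_one] at h
    have hn' : (n : ℂ) ≠ 0 := by exact_mod_cast hn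
    calc _ = (2 / n * b k : ℂ) * ∑ j ∈ range n, (Real.cos (2 * π * (k + 1) * j / n) : ℂ) *
          Complex.exp (2 * π * Complex.I * j * l / n) := by
            rw [mul_sum]
            exact sum_congr rfl fun j _ => by push_cast; ring
      _ = _ := by
        rw [h]
        split_ifs <;> push_cast <;> field_simp <;> ring
  calc _ = ∑ j ∈ range n, ∑' k : ℕ,
        ((2 / n * (Real.cos (2 * π * (k + 1) * j / n) * b k) : ℝ) : ℂ) *
          Complex.exp (2 * π * Complex.I * j * l / n) := by
          simp_rw [← tsum_mul_left, Complex.ofReal_tsum, ← tsum_mul_right]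
    _ = _ := by
      rw [← Summable.tsum_finsetSum fun j _ =>
        (Complex.summable_ofReal.2 ((hcos j).mul_left _)).mul_right _]
      rw [tsum_congr hk, ← Complex.ofReal_tsum, (hite _).tsum_add (hite _)]

theorem tsum_ite_dvd_sub_eq_tsum {α : Type*} [AddCommMonoid α] [TopologicalSpace α]
    (f : ℕ → α) {n r : ℕ} (hr : 0 < r) (hrn : r ≤ n) :
    ∑' k : ℕ, (if (n : ℤ) ∣ (k + 1 : ℤ) - r then f (k + 1) else 0) =
      ∑' q : ℕ, f (q * n + r) := by
  have hinj : Function.Injective fun q : ℕ => q * n + r - 1 := fun x y h => by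
    have : x * n = y * n := by simp only at h; omega
    exact Nat.eq_of_mul_eq_mul_right (by omega) this
  rw [← hinj.tsum_eq]
  · refine tsum_congr fun q => ?_
    have hq : q * n + r - 1 + 1 = q * n + r := by omega
    rw [hq, if_pos ⟨q, by push_cast [Nat.cast_sub (show 1 ≤ q * n + r by omega)]; ring⟩]
  · intro k hk
    obtain ⟨c, hc⟩ : (n : ℤ) ∣ (k + 1 : ℤ) - r := by
      by_contra h
      exact hk (if_neg h)
    -- `n * c = k + 1 - r > -n`
    have hc0 : 0 ≤ c := by nlinarith
    lift c to ℕ using hc0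
    refine ⟨c, ?_⟩
    simp only
    zify [show 1 ≤ c * n + r by omega]
    linarith

theorem tsum_ite_dvd_add_eq_tsum {α : Type*} [AddCommMonoid α] [TopologicalSpace α]
    (f : ℕ → α) {n l : ℕ} (hl : l < n) :
    ∑' k : ℕ, (if (n : ℤ) ∣ (k + 1 : ℤ) + l then f (k + 1) else 0) =
      ∑' q : ℕ, f (q * n + (n - l)) := by
  rw [← tsum_ite_dvd_sub_eq_tsum f (by omega) (Nat.sub_le n l)]
  refine tsum_congr fun k => if_congr ?_ rfl rfl
  rw [Nat.cast_sub hl.le, sub_sub_eq_add_sub, dvd_sub_self_right]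

theorem summable_mul_add_one_rpow_neg {c s : ℝ} (hc : 0 ≤ c) (hs : 1 < s) :
    Summable fun k : ℕ => (c * (k + 1)) ^ (-s) := by
  have h := (summable_nat_add_iff 1).2 (Real.summable_nat_rpow.2 (neg_lt_neg hs))
  refine (h.mul_left (c ^ (-s))).congr fun k => ?_
  rw [← mul_rpow hc (by positivity), Nat.cast_add_one]

/-- The discrete Fourier transform of the sequence `(c_j)` gives the eigenvalues `λ_{c,l}`. -/
theorem dft_of_spline_circulant_entries
    (m : ℝ) (hm : 1 / 2 < m) (n : ℕ) (hn : 1 ≤ n) (l : ℕ) (hl : l ≤ n - 1) :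
    ∑ j ∈ Finset.range n, (cSeq m n j : ℂ) *
        Complex.exp (2 * π * Complex.I * j * l / n) = (lamC m n l : ℂ) := by
  set f : ℕ → ℝ := fun x => (2 * π * x) ^ (-(2 * m))
  have hcSeq : ∀ j : ℕ,
      cSeq m n j = 2 / n * ∑' k : ℕ, cos (2 * π * (k + 1) * j / n) * f (k + 1) :=
    fun j => congrArg _ <| tsum_congr fun k => by
      simp only [f, Nat.cast_add_one]
      rw [rpow_neg (by positivity), div_eq_mul_inv]
  have hf : Summable fun k => f (k + 1) := by
    simpa only [f, Nat.cast_add_one] using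
      summable_mul_add_one_rpow_neg two_pi_pos.le (by linarith)
  simp_rw [hcSeq]
  rw [sum_range_cosine_series_mul_exp (by omega) hf, Complex.ofReal_inj,
    tsum_ite_dvd_add_eq_tsum f (by omega)]
  rcases Nat.eq_zero_or_pos l with rfl | hl0
  · have hsub_zero :
        (∑' k : ℕ, if (n : ℤ) ∣ (k + 1 : ℤ) - (0 : ℕ) then f (k + 1) else 0) =
          ∑' k : ℕ, if (n : ℤ) ∣ (k + 1 : ℤ) + (0 : ℕ) then f (k + 1) else 0 := by
      simp only [Nat.cast_zero, sub_zero, add_zero]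
    rw [hsub_zero, tsum_ite_dvd_add_eq_tsum f (by omega), lamC, if_pos rfl,
      ← two_mul]
    refine congrArg _ (tsum_congr fun q => ?_)
    simp only [f, Nat.sub_zero]
    push_cast
    ring_nf
  · rw [tsum_ite_dvd_sub_eq_tsum f hl0 (by omega), lamC, if_neg hl0.ne']
    congr 1 <;> refine tsum_congr fun q => ?_
    · simp only [f]
      push_cast [Nat.cast_sub (show l ≤ n by omega)]
      ring_nf
    · simp only [f]
      push_cast
      ring_nf

end
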